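/- Let Γ be a discrete group and (π, ρ) a covariant representation of (Γ, A) such that the inclusion ρ(A) ⊆ Γ ⋉_π^ρ A is Γ-tight. If D is a G-invariant intermediate algebra with C*_π(Γ) ⊆ D ⊆ Γ ⋉_π^ρ A and D is injective (so that there is a conditional expectation E: Γ ⋉_π^ρ A → D), then D = Γ ⋉_π^ρ A. -/

import Mathlib

/-!
The unitaries `u g` lie in `D`, so they lie in the multiplicative domain of the ucp projection
`E` (Choi): applying `E` to the Gram matrix of `1, d, x` gives a Gram matrix `C* C`, and the
column `C₁ - C₀ E(d)` has vanishing sum of squares, which in a C*-algebra forces it to vanish.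
Hence `E` commutes with `Ad u`, i.e. it is `Γ`-equivariant, and `E ∘ ρ` is a `Γ`-equivariant ucp
map `A → CP`. Tightness gives `E ∘ ρ = ρ`, so `ρ(A) ⊆ D`; as `D` is closed and contains all
generators of `CP`, `D = CP`.
-/

open scoped BoundedContinuousFunction ENNReal

/-- An element of a star ring is (formally) positive if it is of the form `b* * b`. -/
def StarPos {R : Type*} [NonUnitalSemiring R] [StarRing R] (a : R) : Prop :=
  ∃ b, a = star b * b

section UCP

variable {A B : Type*} [Ring A] [StarRing A] [Algebra ℂ A]
  [Ring B] [StarRing B] [Algebra ℂ B]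

/-- A ℂ-linear map between unital star algebras is unital completely positive if it is
unital and all its matrix amplifications preserve positivity. -/
def IsUCP (φ : A →ₗ[ℂ] B) : Prop :=
  φ 1 = 1 ∧ ∀ (n : ℕ) (M : Matrix (Fin n) (Fin n) A), StarPos M → StarPos (M.map φ)

/-- A unital positive ℂ-linear map between unital star algebras. -/
def IsUP (φ : A →ₗ[ℂ] B) : Prop :=
  φ 1 = 1 ∧ ∀ a : A, StarPos a → StarPos (φ a)

/-- Equivariance of a linear map with respect to actions of `G`. -/
def IsEquivariant (G : Type*) [SMul G A] [SMul G B] (φ : A →ₗ[ℂ] B) : Prop :=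
  ∀ (g : G) (a : A), φ (g • a) = g • φ a

/-- An inclusion (embedding) `ι : A → B` of `G`-operator algebras is `G`-tight if the only
`G`-equivariant ucp map `A → B` is the inclusion itself. -/
def IsTight (G : Type*) [SMul G A] [SMul G B] (ι : A →⋆ₐ[ℂ] B) : Prop :=
  ∀ φ : A →ₗ[ℂ] B, IsUCP φ → IsEquivariant G φ → φ = ι.toAlgHom.toLinearMap

end UCP

open UniformSpace

namespace UniformSpace.Completion

section StarRing

variable {R : Type*} [NormedRing R] [StarRing R] [NormedStarGroup R]

noncomputable instance : Star (Completion R) := ⟨Completion.map star⟩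

theorem coe_star (a : R) : ((star a : R) : Completion R) = star (a : Completion R) :=
  (map_coe star_isometry.uniformContinuous a).symm

instance : ContinuousStar (Completion R) := ⟨continuous_map⟩

noncomputable instance : StarRing (Completion R) where
  star_involutive x := by
    induction x using induction_on with
    | hp => exact isClosed_eq (by fun_prop) continuous_id
    | ih a => rw [← coe_star, ← coe_star, star_star]
  star_mul x y := by
    induction x, y using induction_on₂ with
    | hp => exact isClosed_eq (by fun_prop) (by fun_prop)
    | ih a b => simp only [← coe_mul, ← coe_star, star_mul]
  star_add x y := by
    induction x, y using induction_on₂ with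
    | hp => exact isClosed_eq (by fun_prop) (by fun_prop)
    | ih a b => simp only [← coe_add, ← coe_star, star_add]

end StarRing

section CStarAlgebra

variable {R : Type*} [NormedRing R] [StarRing R] [CStarRing R]

instance : CStarRing (Completion R) where
  norm_mul_self_le x := by
    induction x using induction_on with
    | hp => exact isClosed_le (by fun_prop) (by fun_prop)
    | ih a => simpa only [← coe_star, ← coe_mul, norm_coe] using CStarRing.norm_mul_self_le a

variable [NormedAlgebra ℂ R] [StarModule ℂ R]

noncomputable instance : NormedAlgebra ℂ (Completion R) where
  norm_smul_le := norm_smul_le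

instance : StarModule ℂ (Completion R) where
  star_smul c x := by
    induction x using induction_on with
    | hp =>
      exact isClosed_eq (continuous_star.comp (continuous_const_smul (T := Completion R) c))
        ((continuous_const_smul _).comp continuous_star)
    | ih a => rw [← coe_smul, ← coe_star, star_smul, coe_smul, coe_star]

noncomputable instance : CStarAlgebra (Completion R) where

end CStarAlgebra

end UniformSpace.Completion

/- `R` need not be complete; the order argument is run in its completion, a C*-algebra with the
spectral order. -/
theorem CStarRing.sum_star_mul_self_eq_zero_iff {R ι : Type*} [NormedRing R] [StarRing R]
    [CStarRing R] [NormedAlgebra ℂ R] [StarModule ℂ R] (s : Finset ι) (x : ι → R) :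
    ∑ i ∈ s, star (x i) * x i = 0 ↔ ∀ i ∈ s, x i = 0 := by
  refine ⟨fun h i hi => ?_, fun h => Finset.sum_eq_zero fun i hi => by simp [h i hi]⟩
  let _ : PartialOrder (Completion R) := CStarAlgebra.spectralOrder _
  have _ : StarOrderedRing (Completion R) := CStarAlgebra.spectralOrderedRing _
  have hsum : ∑ i ∈ s, star (x i : Completion R) * x i = 0 := by
    have := congrArg Completion.coeRingHom h
    simpa only [map_sum, map_mul, map_zero, Completion.coeRingHom, RingHom.coe_mk,
      MonoidHom.coe_mk, OneHom.coe_mk, Completion.coe_star] using this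
  have hi' := (Finset.sum_eq_zero_iff_of_nonneg fun i _ => star_mul_self_nonneg _).1 hsum i hi
  rw [← Completion.coe_star, ← Completion.coe_mul, ← Completion.coe_zero,
    (Completion.coe_injective R).eq_iff] at hi'
  exact (CStarRing.star_mul_self_eq_zero_iff _).1 hi'

theorem starPos_gram {R : Type*} [NonUnitalSemiring R] [StarRing R] {n : ℕ} [NeZero n]
    (v : Fin n → R) : StarPos (Matrix.of fun i j => star (v i) * v j) := by
  refine ⟨Matrix.of fun i j => if i = 0 then v j else 0, ?_⟩
  ext i j
  simp [Matrix.mul_apply]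

section UCP

variable {A B : Type*} [Ring A] [StarRing A] [Algebra ℂ A]

theorem IsUCP.exists_gram [Ring B] [StarRing B] [Algebra ℂ B] {E : A →ₗ[ℂ] B}
    (hE : IsUCP E) {n : ℕ} [NeZero n] (v : Fin n → A) :
    ∃ C : Matrix (Fin n) (Fin n) B, ∀ j l, ∑ k, star (C k j) * C k l = E (star (v j) * v l) := by
  obtain ⟨C, hC⟩ := hE.2 n _ (starPos_gram v)
  exact ⟨C, fun j l => by simpa [Matrix.mul_apply] using (congrFun₂ hC j l).symm⟩

variable [NormedRing B] [StarRing B] [CStarRing B] [NormedAlgebra ℂ B] [StarModule ℂ B]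
  {E : A →ₗ[ℂ] B}

theorem IsUCP.map_star_mul_eq_and_map_mul_eq (hE : IsUCP E) {d : A}
    (hd : E (star d * d) = star (E d) * E d) (hds : E (star d) = star (E d)) (x : A) :
    E (star d * x) = star (E d) * E x ∧ E (star x * d) = E (star x) * E d := by
  obtain ⟨C, hC⟩ := hE.exists_gram ![1, d, x]
  have h00 : ∑ k, star (C k 0) * C k 0 = 1 := by simpa [hE.1] using hC 0 0
  have h01 : ∑ k, star (C k 0) * C k 1 = E d := by simpa using hC 0 1
  have h10 : ∑ k, star (C k 1) * C k 0 = star (E d) := by simpa [hds] using hC 1 0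
  have h11 : ∑ k, star (C k 1) * C k 1 = star (E d) * E d := by simpa [hd] using hC 1 1
  have h02 : ∑ k, star (C k 0) * C k 2 = E x := by simpa using hC 0 2
  have h20 : ∑ k, star (C k 2) * C k 0 = E (star x) := by simpa using hC 2 0
  set w : Fin 3 → B := fun k => C k 1 - C k 0 * E d with hw
  have hw_sum : ∑ k, star (w k) * w k = 0 := calc
    ∑ k, star (w k) * w k = ∑ k, star (C k 1) * C k 1 - (∑ k, star (C k 1) * C k 0) * E d
        - star (E d) * ∑ k, star (C k 0) * C k 1
        + star (E d) * (∑ k, star (C k 0) * C k 0) * E d := by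
      simp only [Finset.mul_sum, Finset.sum_mul, ← Finset.sum_sub_distrib,
        ← Finset.sum_add_distrib]
      refine Finset.sum_congr rfl fun k _ => ?_
      simp only [hw, star_sub, star_mul]
      noncomm_ring
    _ = 0 := by rw [h00, h01, h10, h11, mul_one]; abel
  have hC1 : ∀ k, C k 1 = C k 0 * E d := fun k => sub_eq_zero.1 <|
    (CStarRing.sum_star_mul_self_eq_zero_iff _ w).1 hw_sum k (Finset.mem_univ k)
  constructor
  · calc E (star d * x) = ∑ k, star (C k 1) * C k 2 := by simpa using (hC 1 2).symm
      _ = star (E d) * E x := by simp only [hC1, star_mul, mul_assoc, ← Finset.mul_sum, h02]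
  · calc E (star x * d) = ∑ k, star (C k 2) * C k 1 := by simpa using (hC 2 1).symm
      _ = E (star x) * E d := by simp only [hC1, ← mul_assoc, ← Finset.sum_mul, h20]

theorem IsUCP.map_mul_of_mem_unitary (hE : IsUCP E) {U : A} (hU : U ∈ unitary A)
    (hEU : E U ∈ unitary B) (hEstar : E (star U) = star (E U)) (x : A) :
    E (U * x) = E U * E x ∧ E (x * U) = E x * E U := by
  constructor
  · have h := (hE.map_star_mul_eq_and_map_mul_eq (d := star U)
      (by rw [star_star, Unitary.mul_star_self_of_mem hU, hE.1, hEstar, star_star,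
        Unitary.mul_star_self_of_mem hEU])
      (by rw [star_star, hEstar, star_star]) x).1
    rwa [star_star, hEstar, star_star] at h
  · simpa using (hE.map_star_mul_eq_and_map_mul_eq
      (by rw [Unitary.star_mul_self_of_mem hU, hE.1, Unitary.star_mul_self_of_mem hEU])
      hEstar (star x)).2

end UCP

theorem IsUCP.map_unitary_conj {A : Type*} [NormedRing A] [StarRing A] [CStarRing A]
    [NormedAlgebra ℂ A] [StarModule ℂ A] {E : A →ₗ[ℂ] A} (hE : IsUCP E) {U : A}
    (hU : U ∈ unitary A) (hEU : E U = U) (hEstar : E (star U) = star U) (x : A) :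
    E (U * x * star U) = U * E x * star U := by
  have hU' : star U ∈ unitary A := Unitary.star_mem hU
  rw [mul_assoc, (hE.map_mul_of_mem_unitary hU (by rwa [hEU]) (by rw [hEU, hEstar]) _).1,
    (hE.map_mul_of_mem_unitary hU' (by rwa [hEstar])
      (by rw [star_star, hEU, hEstar, star_star]) x).2, hEU, hEstar, mul_assoc]

theorem IsUCP.comp_starAlgHom {A B C : Type*} [Ring A] [StarRing A] [Algebra ℂ A]
    [Ring B] [StarRing B] [Algebra ℂ B] [Ring C] [StarRing C] [Algebra ℂ C]
    {E : B →ₗ[ℂ] C} (hE : IsUCP E) (ρ : A →⋆ₐ[ℂ] B) :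
    IsUCP (E ∘ₗ ρ.toAlgHom.toLinearMap) := by
  refine ⟨by simp [hE.1], fun n M ⟨b, hb⟩ => ?_⟩
  have hmap : M.map (E ∘ₗ ρ.toAlgHom.toLinearMap) = (M.map ρ).map E := by
    rw [Matrix.map_map]; rfl
  rw [hmap]
  refine hE.2 n _ ⟨b.map ρ, ?_⟩
  rw [hb, Matrix.map_mul, Matrix.star_eq_conjTranspose, Matrix.star_eq_conjTranspose,
    Matrix.conjTranspose_map _ (map_star ρ)]

/-- Let `(π, ρ)` be a covariant representation of `(Γ, A)` with crossed
product `CP = Γ ⋉_π^ρ A` (generated by `ρ(A)` and the unitaries `u(Γ)`, with `Γ` acting by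
`Ad u`), such that the inclusion `ρ(A) ⊆ CP` is `Γ`-tight. If `D` is an intermediate
C*-algebra with `C*_π(Γ) ⊆ D ⊆ CP` admitting a conditional expectation `E : CP → D`
(e.g. if `D` is injective), then `D = CP`. -/
theorem stmt_19 {Γ A CP : Type*} [Group Γ]
    [NormedRing A] [StarRing A] [CStarRing A] [NormedAlgebra ℂ A] [StarModule ℂ A]
    [NormedRing CP] [StarRing CP] [CStarRing CP] [NormedAlgebra ℂ CP] [StarModule ℂ CP]
    [MulSemiringAction Γ A] [MulSemiringAction Γ CP]
    (ρ : A →⋆ₐ[ℂ] CP) (u : Γ →* CPˣ)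
    (hu_star : ∀ g : Γ, star ((u g : CP)) = (((u g)⁻¹ : CPˣ) : CP))
    (hcov : ∀ (g : Γ) (a : A), ρ (g • a) = (u g : CP) * ρ a * (((u g)⁻¹ : CPˣ) : CP))
    (hAd : ∀ (g : Γ) (x : CP), g • x = (u g : CP) * x * (((u g)⁻¹ : CPˣ) : CP))
    -- `CP` is generated, as a C*-algebra, by `ρ(A)` and the unitaries `u(Γ)`:
    (hgen : ∀ S : StarSubalgebra ℂ CP, IsClosed (S : Set CP) →
      Set.range ρ ⊆ S → (∀ g : Γ, (u g : CP) ∈ S) → S = ⊤)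
    (htight : IsTight Γ ρ)
    (D : StarSubalgebra ℂ CP) (hD_closed : IsClosed (D : Set CP))
    (hπD : ∀ g : Γ, (u g : CP) ∈ D)
    (E : CP →ₗ[ℂ] CP) (hEucp : IsUCP E)
    (hEran : ∀ x : CP, E x ∈ D) (hEproj : ∀ d ∈ D, E d = d) :
    D = ⊤ := by
  have hinv : ∀ g, (((u g)⁻¹ : CPˣ) : CP) = star (u g : CP) := fun g => (hu_star g).symm
  have hunitary : ∀ g, (u g : CP) ∈ unitary CP := fun g =>
    Unitary.mem_iff.2 ⟨by rw [← hinv, Units.inv_mul], by rw [← hinv, Units.mul_inv]⟩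
  have hE_equivariant : IsEquivariant Γ E := fun g x => by
    rw [hAd, hAd, hinv, hEucp.map_unitary_conj (hunitary g) (hEproj _ (hπD g))
      (hEproj _ (star_mem (hπD g)))]
  have hφ : E ∘ₗ ρ.toAlgHom.toLinearMap = ρ.toAlgHom.toLinearMap :=
    htight _ (hEucp.comp_starAlgHom ρ) fun g a => by
      show E (ρ (g • a)) = g • E (ρ a)
      rw [hcov, ← hAd, hE_equivariant]
  refine hgen D hD_closed ?_ hπD
  rintro _ ⟨a, rfl⟩
  exact LinearMap.congr_fun hφ a ▸ hEran (ρ a)
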